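/- arXiv:math-ph/0203019 — 3 statements merged into one kernel-verified Lean document; each statement's English description precedes it below -/
import Mathlib

section
/- For any two bounded operators P and Q on a Hilbert space, the identity (Q-P) - (Q-P)^3 = (1/2)[QP, PQ] - (1/2)[(1-Q)(1-P), (1-P)(1-Q)] + (1-2Q)(Q-Q^2) - (1-2P)(P-P^2) + (3/2){Q-P, (Q-Q^2) + (P-P^2)} holds, where [A,B] = AB - BA and {A,B} = AB + BA. -/
/-- For arbitrary bounded operators `P, Q` on a complex Hilbert space,
`(Q-P) - (Q-P)³ = ½[QP,PQ] - ½[(1-Q)(1-P),(1-P)(1-Q)]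
  + (1-2Q)(Q-Q²) - (1-2P)(P-P²) + (3/2){Q-P, (Q-Q²)+(P-P²)}`. -/
theorem stmt0 {H : Type*} [NormedAddCommGroup H] [InnerProductSpace ℂ H] [CompleteSpace H]
    (P Q : H →L[ℂ] H) :
    (Q - P) - (Q - P) ^ 3 =
      (2⁻¹ : ℂ) • (Q * P * (P * Q) - P * Q * (Q * P))
      - (2⁻¹ : ℂ) • ((1 - Q) * (1 - P) * ((1 - P) * (1 - Q))
          - (1 - P) * (1 - Q) * ((1 - Q) * (1 - P)))
      + (1 - (2 : ℂ) • Q) * (Q - Q ^ 2) - (1 - (2 : ℂ) • P) * (P - P ^ 2)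
      + ((3 : ℂ) / 2) • ((Q - P) * ((Q - Q ^ 2) + (P - P ^ 2))
          + ((Q - Q ^ 2) + (P - P ^ 2)) * (Q - P)) := by
  apply smul_right_injective (H →L[ℂ] H) (two_ne_zero (α := ℂ))
  simp only [smul_add, smul_sub, smul_smul, smul_mul_assoc, mul_smul_comm]
  norm_num
  rw [show (3:ℂ) = 2 + 1 by norm_num]
  simp only [add_smul, one_smul, two_smul]
  noncomm_ring
end

section
/- If P and Q are orthogonal projections on a Hilbert space with Q - P in the Schatten trace class J_1, then for the projections P = P^2, Q = Q^2 the identity (Q-P) - (Q-P)^3 = [QP, [P, Q-P]] holds. -/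
open scoped InnerProductSpace
open ContinuousLinearMap in
/-- Sum over a Hilbert basis of `⟨e i, |T|^p (e i)⟩`, where `|T|^p = (T†T)^{p/2}`
is defined by the continuous functional calculus. -/
noncomputable def schattenSum {H : Type*} [NormedAddCommGroup H] [InnerProductSpace ℂ H]
    [CompleteSpace H] {ι : Type*} (b : HilbertBasis ι ℂ H) (p : ℝ) (T : H →L[ℂ] H) : ℝ :=
  ∑' i, (⟪b i, (cfc (fun x : ℝ => x ^ (p / 2)) (adjoint T * T)) (b i)⟫_ℂ).re

open ContinuousLinearMap in
/-- `T` belongs to the Schatten ideal `J_p` (w.r.t. the basis `b`). -/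
def MemSchatten {H : Type*} [NormedAddCommGroup H] [InnerProductSpace ℂ H]
    [CompleteSpace H] {ι : Type*} (b : HilbertBasis ι ℂ H) (p : ℝ) (T : H →L[ℂ] H) : Prop :=
  Summable fun i => (⟪b i, (cfc (fun x : ℝ => x ^ (p / 2)) (adjoint T * T)) (b i)⟫_ℂ).re

/-- The Schatten `p`-norm. -/
noncomputable def schattenNorm {H : Type*} [NormedAddCommGroup H] [InnerProductSpace ℂ H]
    [CompleteSpace H] {ι : Type*} (b : HilbertBasis ι ℂ H) (p : ℝ) (T : H →L[ℂ] H) : ℝ :=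
  (schattenSum b p T) ^ (1 / p)

/-- The trace, evaluated in the Hilbert basis `b`. -/
noncomputable def traceB {H : Type*} [NormedAddCommGroup H] [InnerProductSpace ℂ H]
    [CompleteSpace H] {ι : Type*} (b : HilbertBasis ι ℂ H) (T : H →L[ℂ] H) : ℂ :=
  ∑' i, ⟪b i, T (b i)⟫_ℂ
open ContinuousLinearMap in
/-- Avron–Seiler–Simon identity: for orthogonal projections `P, Q` with `Q - P`
trace class, `(Q-P) - (Q-P)³ = [QP, [P, Q-P]]`. -/
theorem stmt4 {H : Type*} [NormedAddCommGroup H] [InnerProductSpace ℂ H] [CompleteSpace H]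
    {ι : Type*} (b : HilbertBasis ι ℂ H) (P Q : H →L[ℂ] H)
    (hP : IsSelfAdjoint P) (hP2 : P ^ 2 = P) (hQ : IsSelfAdjoint Q) (hQ2 : Q ^ 2 = Q)
    (htc : MemSchatten b 1 (Q - P)) :
    (Q - P) - (Q - P) ^ 3 =
      Q * P * (P * (Q - P) - (Q - P) * P) - (P * (Q - P) - (Q - P) * P) * (Q * P) := by
  have hp : P * P = P := by rw [← sq, hP2]
  have hq : Q * Q = Q := by rw [← sq, hQ2]
  have e3 : (Q - P) ^ 3 = (Q-P)*((Q-P)*(Q-P)) := by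
    rw [pow_succ, pow_two, mul_assoc]
  rw [e3]
  simp only [mul_sub, sub_mul, hp, hq]
  noncomm_ring [← mul_assoc, hp, hq]
  rw [mul_assoc Q P P, hp, mul_assoc P Q Q, hq]
end

section
/- Let P and Q be orthogonal projections on a Hilbert space with Q - P in the Schatten class J_{2n+3} for some n ≥ 0. Then tr((Q-P)^{2n+3}) = tr((Q-P)^{2n+1}) whenever Q - P ∈ J_{2n+1}. -/
/-!
Write `D = Q - P` and `E = 1 - P - Q`. For projections `E D = -D E` and `E² + D² = 1`, hence
`D^{2n+3} = D^{2n+1} - D^{2n+1} E²`, and it remains to see that `tr (D^{2n+1} E²) = 0`.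
As `D ∈ J_{2n+1}`, `D^{2n+1} = Y Z` with `Y = D |D|^{n-1/2}` and `Z = |D|^{n+1/2}` Hilbert–Schmidt,
so the trace is cyclic on `D^{2n+1} E²`, and anticommutation gives
`tr (D^{2n+1} E²) = tr (E D^{2n+1} E) = -tr (D^{2n+1} E²)`.
-/

open scoped InnerProductSpace
section Anticommute

variable {R : Type*} [Ring R]

theorem IsIdempotentElem.one_sub_sub_mul_sub {p q : R} (hp : IsIdempotentElem p)
    (hq : IsIdempotentElem q) : (1 - p - q) * (q - p) = -((q - p) * (1 - p - q)) := by
  simp only [mul_sub, sub_mul, one_mul, mul_one, hp.eq, hq.eq]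
  abel

theorem IsIdempotentElem.one_sub_sub_mul_self_add_sub_mul_self {p q : R}
    (hp : IsIdempotentElem p) (hq : IsIdempotentElem q) :
    (1 - p - q) * (1 - p - q) + (q - p) * (q - p) = 1 := by
  simp only [mul_sub, sub_mul, one_mul, mul_one, hp.eq, hq.eq]
  abel

theorem mul_pow_odd_of_mul_eq_neg {d e : R} (h : e * d = -(d * e)) (n : ℕ) :
    e * d ^ (2 * n + 1) = -(d ^ (2 * n + 1) * e) := by
  have hsq : Commute e (d * d) := by
    simp only [Commute, SemiconjBy, ← mul_assoc, h, neg_mul]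
    simp only [mul_assoc, h, mul_neg, neg_neg]
  rw [pow_succ, pow_mul, sq, ← mul_assoc, (hsq.pow_right n).eq, mul_assoc, h, mul_neg,
    ← mul_assoc]

end Anticommute

theorem continuous_mul_abs_rpow {s : ℝ} (hs : -1 < s) : Continuous fun x : ℝ => x * |x| ^ s := by
  have hnorm : ∀ x : ℝ, ‖x * (|x| ^ s)‖ = |x| ^ (s + 1) := fun x => by
    rw [norm_mul, Real.norm_eq_abs, Real.norm_eq_abs,
      abs_of_nonneg (Real.rpow_nonneg (abs_nonneg x) s),
      Real.rpow_add_one' (abs_nonneg x) (by linarith), mul_comm]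
  refine continuous_iff_continuousAt.2 fun x => ?_
  rcases eq_or_ne x 0 with rfl | hx
  · have hlim : Filter.Tendsto (fun x : ℝ => |x| ^ (s + 1)) (nhds 0) (nhds 0) := by
      simpa [Function.comp_def, Real.zero_rpow (by linarith : s + 1 ≠ 0)] using
        ((Real.continuous_rpow_const (by linarith : (0 : ℝ) ≤ s + 1)).comp
          continuous_abs).tendsto 0
    simpa [ContinuousAt] using squeeze_zero_norm (fun x => (hnorm x).le) hlim
  · exact continuousAt_id.mul
      ((Real.continuousAt_rpow_const _ _ (Or.inl (abs_ne_zero.2 hx))).comp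
        continuous_abs.continuousAt)

theorem IsSelfAdjoint.cfc_rpow_star_mul_self {A : Type*} [CStarAlgebra A] {a : A}
    (ha : IsSelfAdjoint a) {p : ℝ} (hp : 0 ≤ p) :
    cfc (fun x : ℝ => x ^ (p / 2)) (star a * a) = cfc (fun x : ℝ => |x| ^ p) a := by
  rw [ha.star_eq, ← sq, ← cfc_pow_id (R := ℝ) a 2,
    ← cfc_comp' (fun x : ℝ => x ^ (p / 2)) (fun x : ℝ => x ^ 2) a
      (Real.continuous_rpow_const (by positivity)).continuousOn]
  refine cfc_congr fun x _ => ?_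
  rw [← sq_abs, ← Real.rpow_two, ← Real.rpow_mul (abs_nonneg x)]
  ring_nf

section HilbertSchmidt

open ContinuousLinearMap

variable {𝕜 H ι : Type*} [RCLike 𝕜] [NormedAddCommGroup H] [InnerProductSpace 𝕜 H]
  (b : HilbertBasis ι 𝕜 H)

theorem HilbertBasis.hasSum_norm_inner_sq (x : H) :
    HasSum (fun i => ‖⟪b i, x⟫_𝕜‖ ^ 2) (‖x‖ ^ 2) := by
  simpa [b.repr_apply_apply] using lp.hasSum_norm (p := 2) (by norm_num) (b.repr x)

theorem HilbertBasis.hasSum_inner_mul_apply [CompleteSpace H] (Y Z : H →L[𝕜] H) (i : ι) :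
    HasSum (fun j => ⟪b i, Y (b j)⟫_𝕜 * ⟪b j, Z (b i)⟫_𝕜) ⟪b i, (Y * Z) (b i)⟫_𝕜 := by
  simpa only [adjoint_inner_left, mul_apply_eq_comp] using
    b.hasSum_inner_mul_inner (adjoint Y (b i)) (Z (b i))

def IsHilbertSchmidt (T : H →L[𝕜] H) : Prop :=
  Summable fun i => ‖T (b i)‖ ^ 2

variable {b} {T Y Z : H →L[𝕜] H}

theorem isHilbertSchmidt_iff_summable_prod :
    IsHilbertSchmidt b T ↔ Summable fun p : ι × ι => ‖⟪b p.2, T (b p.1)⟫_𝕜‖ ^ 2 := by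
  rw [summable_prod_of_nonneg fun _ => by positivity]
  have hcol j := b.hasSum_norm_inner_sq (T (b j))
  exact ⟨fun hT => ⟨fun j => (hcol j).summable, hT.congr fun j => (hcol j).tsum_eq.symm⟩,
    fun hT => hT.2.congr fun j => (hcol j).tsum_eq⟩

theorem IsHilbertSchmidt.mul_left (A : H →L[𝕜] H) (hT : IsHilbertSchmidt b T) :
    IsHilbertSchmidt b (A * T) :=
  (Summable.mul_left (‖A‖ ^ 2) hT).of_nonneg_of_le (fun _ => by positivity) fun j => by
    rw [mul_apply_eq_comp, ← mul_pow]
    gcongr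
    exact A.le_opNorm _

theorem IsHilbertSchmidt.summable_norm_inner_mul_inner (hY : IsHilbertSchmidt b Y)
    (hZ : IsHilbertSchmidt b Z) :
    Summable fun p : ι × ι => ‖⟪b p.1, Y (b p.2)⟫_𝕜 * ⟪b p.2, Z (b p.1)⟫_𝕜‖ := by
  have hY' : Summable fun p : ι × ι => ‖⟪b p.1, Y (b p.2)⟫_𝕜‖ ^ 2 :=
    (Equiv.prodComm ι ι).summable_iff.2 (isHilbertSchmidt_iff_summable_prod.1 hY)
  have hZ' := isHilbertSchmidt_iff_summable_prod.1 hZ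
  refine (((hY'.add hZ').div_const 2)).of_nonneg_of_le (fun _ => norm_nonneg _) fun p => ?_
  rw [norm_mul]
  linarith [two_mul_le_add_sq ‖⟪b p.1, Y (b p.2)⟫_𝕜‖ ‖⟪b p.2, Z (b p.1)⟫_𝕜‖]

variable [CompleteSpace H]

theorem isHilbertSchmidt_iff_summable_re_inner_adjoint_mul_self :
    IsHilbertSchmidt b T ↔ Summable fun i => RCLike.re ⟪b i, (adjoint T * T) (b i)⟫_𝕜 := by
  simp only [IsHilbertSchmidt, apply_norm_sq_eq_inner_adjoint_right]
  rfl

theorem IsHilbertSchmidt.adjoint (hT : IsHilbertSchmidt b T) :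
    IsHilbertSchmidt b (ContinuousLinearMap.adjoint T) := by
  rw [isHilbertSchmidt_iff_summable_prod] at hT ⊢
  refine ((Equiv.prodComm ι ι).summable_iff.2 hT).congr fun p => ?_
  simp [adjoint_inner_right, norm_inner_symm]

theorem IsHilbertSchmidt.mul_right (A : H →L[𝕜] H) (hT : IsHilbertSchmidt b T) :
    IsHilbertSchmidt b (T * A) := by
  simpa [← star_eq_adjoint] using (hT.adjoint.mul_left (ContinuousLinearMap.adjoint A)).adjoint

theorem IsHilbertSchmidt.hasSum_inner_mul_apply (hY : IsHilbertSchmidt b Y)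
    (hZ : IsHilbertSchmidt b Z) :
    HasSum (fun i => ⟪b i, (Y * Z) (b i)⟫_𝕜)
      (∑' p : ι × ι, ⟪b p.1, Y (b p.2)⟫_𝕜 * ⟪b p.2, Z (b p.1)⟫_𝕜) :=
  (hY.summable_norm_inner_mul_inner hZ).of_norm.hasSum.prod_fiberwise
    (b.hasSum_inner_mul_apply Y Z)

theorem IsHilbertSchmidt.tsum_inner_mul_comm (hY : IsHilbertSchmidt b Y)
    (hZ : IsHilbertSchmidt b Z) :
    ∑' i, ⟪b i, (Y * Z) (b i)⟫_𝕜 = ∑' i, ⟪b i, (Z * Y) (b i)⟫_𝕜 := by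
  rw [(hY.hasSum_inner_mul_apply hZ).tsum_eq, (hZ.hasSum_inner_mul_apply hY).tsum_eq,
    ← (Equiv.prodComm ι ι).tsum_eq]
  exact tsum_congr fun p => mul_comm _ _

theorem IsHilbertSchmidt.hasSum_inner_mul_mul_self_of_anticomm {X A : H →L[𝕜] H}
    (hY : IsHilbertSchmidt b Y) (hZ : IsHilbertSchmidt b Z) (hYZ : Y * Z = X)
    (hA : A * X = -(X * A)) :
    HasSum (fun i => ⟪b i, (X * (A * A)) (b i)⟫_𝕜) 0 := by
  have hZA : IsHilbertSchmidt b (Z * A) := hZ.mul_right A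
  have hXAA : X * (A * A) = Y * (Z * A * A) := by rw [← hYZ]; simp only [mul_assoc]
  have hAXA : A * Y * (Z * A) = -(X * (A * A)) := by
    rw [show A * Y * (Z * A) = A * X * A by rw [← hYZ]; simp only [mul_assoc], hA, neg_mul,
      mul_assoc]
  have hself : ∑' i, ⟪b i, (X * (A * A)) (b i)⟫_𝕜 = -∑' i, ⟪b i, (X * (A * A)) (b i)⟫_𝕜 :=
    calc _ = ∑' i, ⟪b i, (Z * A * A * Y) (b i)⟫_𝕜 := by
          rw [hXAA]; exact hY.tsum_inner_mul_comm (hZA.mul_right A)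
      _ = ∑' i, ⟪b i, (A * Y * (Z * A)) (b i)⟫_𝕜 := by
          simpa only [mul_assoc] using hZA.tsum_inner_mul_comm (hY.mul_left A)
      _ = _ := by simp only [hAXA, neg_apply, inner_neg_right, tsum_neg]
  have hzero : ∑' i, ⟪b i, (X * (A * A)) (b i)⟫_𝕜 = 0 := by linear_combination hself / 2
  rw [← hzero, hXAA]
  exact (hY.hasSum_inner_mul_apply (hZA.mul_right A)).summable.hasSum

end HilbertSchmidt

section Schatten

variable {H ι : Type*} [NormedAddCommGroup H] [InnerProductSpace ℂ H] [CompleteSpace H]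
  {b : HilbertBasis ι ℂ H} {D : H →L[ℂ] H}

theorem IsSelfAdjoint.isHilbertSchmidt_cfc (hD : IsSelfAdjoint D) {p : ℝ} (hp : 0 ≤ p)
    (hDp : MemSchatten b p D) {f : ℝ → ℝ} (hf : Continuous f) (hff : ∀ x, f x * f x = |x| ^ p) :
    IsHilbertSchmidt b (cfc f D) := by
  rw [isHilbertSchmidt_iff_summable_re_inner_adjoint_mul_self, (cfc_predicate f D).adjoint_eq,
    ← cfc_mul f f D, cfc_congr fun x _ => hff x, ← hD.cfc_rpow_star_mul_self hp,
    ContinuousLinearMap.star_eq_adjoint]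
  exact hDp

theorem IsSelfAdjoint.exists_isHilbertSchmidt_mul_eq (hD : IsSelfAdjoint D) {p : ℝ} (hp : 0 < p)
    (hDp : MemSchatten b p D) :
    ∃ Y Z : H →L[ℂ] H, IsHilbertSchmidt b Y ∧ IsHilbertSchmidt b Z ∧
      Y * Z = cfc (fun x : ℝ => x * |x| ^ (p - 1)) D := by
  have hf := continuous_mul_abs_rpow (s := p / 2 - 1) (by linarith)
  have hg : Continuous fun x : ℝ => |x| ^ (p / 2) :=
    (Real.continuous_rpow_const (by positivity)).comp continuous_abs
  refine ⟨_, _, hD.isHilbertSchmidt_cfc hp.le hDp hf fun x => ?_,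
    hD.isHilbertSchmidt_cfc hp.le hDp hg fun x => ?_, ?_⟩
  · calc x * |x| ^ (p / 2 - 1) * (x * |x| ^ (p / 2 - 1))
        = (|x| ^ (p / 2 - 1) * |x|) * (|x| ^ (p / 2 - 1) * |x|) := by
          rw [mul_mul_mul_comm, ← abs_mul_abs_self x]; ring
      _ = |x| ^ p := by
          rw [← Real.rpow_add_one' (abs_nonneg x) (by linarith),
            ← Real.rpow_add' (abs_nonneg x) (by linarith)]
          ring_nf
  · rw [← Real.rpow_add' (abs_nonneg x) (by linarith)]
    ring_nf
  · rw [← cfc_mul _ _ D hf.continuousOn hg.continuousOn]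
    refine cfc_congr fun x _ => ?_
    rcases eq_or_ne x 0 with rfl | hx
    · simp
    · rw [mul_assoc, ← Real.rpow_add (abs_pos.2 hx)]
      ring_nf

theorem IsSelfAdjoint.exists_isHilbertSchmidt_mul_eq_pow_odd (hD : IsSelfAdjoint D) (n : ℕ)
    (hDn : MemSchatten b (2 * n + 1) D) :
    ∃ Y Z : H →L[ℂ] H, IsHilbertSchmidt b Y ∧ IsHilbertSchmidt b Z ∧ Y * Z = D ^ (2 * n + 1) := by
  obtain ⟨Y, Z, hY, hZ, hYZ⟩ := hD.exists_isHilbertSchmidt_mul_eq (by positivity) hDn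
  refine ⟨Y, Z, hY, hZ, hYZ.trans ?_⟩
  rw [← cfc_pow_id (R := ℝ) D _ hD]
  refine cfc_congr fun x _ => ?_
  rw [add_sub_cancel_right, show 2 * (n : ℝ) = ((2 * n : ℕ) : ℝ) by push_cast; rfl,
    Real.rpow_natCast, Even.pow_abs ⟨n, two_mul n⟩, ← pow_succ']

end Schatten

theorem stmt5_general {H : Type*} [NormedAddCommGroup H] [InnerProductSpace ℂ H] [CompleteSpace H]
    {ι : Type*} (b : HilbertBasis ι ℂ H) (P Q : H →L[ℂ] H)
    (hP : IsSelfAdjoint P) (hP2 : P ^ 2 = P) (hQ : IsSelfAdjoint Q) (hQ2 : Q ^ 2 = Q)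
    (n : ℕ) (h1 : MemSchatten b (2 * n + 1) (Q - P)) :
    traceB b ((Q - P) ^ (2 * n + 3)) = traceB b ((Q - P) ^ (2 * n + 1)) := by
  have hPi : IsIdempotentElem P := (sq P).symm.trans hP2
  have hQi : IsIdempotentElem Q := (sq Q).symm.trans hQ2
  obtain ⟨Y, Z, hY, hZ, hYZ⟩ := (hQ.sub hP).exists_isHilbertSchmidt_mul_eq_pow_odd n h1
  set D := Q - P
  set E := 1 - P - Q
  have hpow : D ^ (2 * n + 3) = D ^ (2 * n + 1) - D ^ (2 * n + 1) * (E * E) := by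
    rw [← mul_one_sub, ← eq_sub_of_add_eq' (hPi.one_sub_sub_mul_self_add_sub_mul_self hQi),
      ← sq, ← pow_add]
  have htrace :
      HasSum (fun i => ⟪b i, (D ^ (2 * n + 1)) (b i)⟫_ℂ) (traceB b (D ^ (2 * n + 1))) := by
    rw [← hYZ]
    exact (hY.hasSum_inner_mul_apply hZ).summable.hasSum
  have hzero := hY.hasSum_inner_mul_mul_self_of_anticomm hZ hYZ
    (mul_pow_odd_of_mul_eq_neg (hPi.one_sub_sub_mul_sub hQi) n)
  simpa only [traceB, hpow, sub_apply, inner_sub_right, sub_zero] using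
    (htrace.sub hzero).tsum_eq

/-- For orthogonal projections `P, Q` with `Q - P ∈ J_{2n+3}` and `Q - P ∈ J_{2n+1}`,
`tr (Q-P)^{2n+3} = tr (Q-P)^{2n+1}`. -/
theorem stmt5 {H : Type*} [NormedAddCommGroup H] [InnerProductSpace ℂ H] [CompleteSpace H]
    {ι : Type*} (b : HilbertBasis ι ℂ H) (P Q : H →L[ℂ] H)
    (hP : IsSelfAdjoint P) (hP2 : P ^ 2 = P) (hQ : IsSelfAdjoint Q) (hQ2 : Q ^ 2 = Q)
    (n : ℕ) (h3 : MemSchatten b (2 * n + 3) (Q - P)) (h1 : MemSchatten b (2 * n + 1) (Q - P)) :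
    traceB b ((Q - P) ^ (2 * n + 3)) = traceB b ((Q - P) ^ (2 * n + 1)) :=
  stmt5_general b P Q hP hP2 hQ hQ2 n h1
end
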